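/- arXiv:2411.04701 — 2 statements merged into one kernel-verified Lean document; each statement's English description precedes it below -/
import Mathlib

section
/- The equidistributing map satisfies the bounds (m₀/M₁)·R·(ξ₂-ξ₁) ≤ x(ξ₂) - x(ξ₁) ≤ (M₁/m₀)·R·(ξ₂-ξ₁) for 0 ≤ ξ₁ ≤ ξ₂ ≤ 1, where 0 < m₀ ≤ M ≤ M₁ on [0,R]. -/
/-! Comparing `M` with the constants `m₀ ≤ M ≤ M₁`, the mass `∫_{x ξ₁}^{x ξ₂} M = (ξ₂ - ξ₁) ∫_0^R M`
lies between `m₀ (x ξ₂ - x ξ₁)` and `M₁ (x ξ₂ - x ξ₁)`, while `∫_0^R M` lies between `m₀ R` and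
`M₁ R`; dividing gives both bounds. Positivity of `M` also forces `x ξ₁ ≤ x ξ₂`. -/

open MeasureTheory Set intervalIntegral

section IntervalIntegralBounds

variable {f : ℝ → ℝ} {p q c d m m' : ℝ}

theorem intervalIntegral_mem_Icc_of_mem_Icc (hf : ContinuousOn f (Icc p q))
    (hbd : ∀ s ∈ Icc p q, m ≤ f s ∧ f s ≤ m') (hc : c ∈ Icc p q) (hd : d ∈ Icc p q)
    (hcd : c ≤ d) : ∫ s in c..d, f s ∈ Icc (m * (d - c)) (m' * (d - c)) := by
  have hsub : Icc c d ⊆ Icc p q := Icc_subset_Icc hc.1 hd.2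
  have hint : IntervalIntegrable f volume c d :=
    (hf.mono (uIcc_subset_Icc hc hd)).intervalIntegrable
  constructor
  · simpa [mul_comm] using
      integral_mono_on hcd intervalIntegrable_const hint fun s hs => (hbd s (hsub hs)).1
  · simpa [mul_comm] using
      integral_mono_on hcd hint intervalIntegrable_const fun s hs => (hbd s (hsub hs)).2

theorem le_of_intervalIntegral_nonneg (hm : 0 < m) (hf : ContinuousOn f (Icc p q))
    (hbd : ∀ s ∈ Icc p q, m ≤ f s) (hc : c ∈ Icc p q) (hd : d ∈ Icc p q)
    (hint : 0 ≤ ∫ s in c..d, f s) : c ≤ d := by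
  by_contra! hdc
  have hlow : m * (c - d) ≤ ∫ s in d..c, f s := by
    have hfi : IntervalIntegrable f volume d c :=
      (hf.mono (uIcc_subset_Icc hd hc)).intervalIntegrable
    simpa [mul_comm] using integral_mono_on hdc.le intervalIntegrable_const hfi
      fun s hs => hbd s (Icc_subset_Icc hd.1 hc.2 hs)
  rw [integral_symm] at hint
  nlinarith

end IntervalIntegralBounds

/-- The equidistributing map satisfies
`(m₀/M₁) R (ξ₂-ξ₁) ≤ x(ξ₂) - x(ξ₁) ≤ (M₁/m₀) R (ξ₂-ξ₁)` for `0 ≤ ξ₁ ≤ ξ₂ ≤ 1`,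
where `0 < m₀ ≤ M ≤ M₁` on `[0,R]`. -/
theorem stmt_10 (R m₀ M₁ : ℝ) (hR : 0 < R) (M : ℝ → ℝ)
    (hMc : ContinuousOn M (Icc 0 R)) (hm₀ : 0 < m₀)
    (hMbd : ∀ s ∈ Icc (0:ℝ) R, m₀ ≤ M s ∧ M s ≤ M₁)
    (x : ℝ → ℝ) (hmap : MapsTo x (Icc 0 1) (Icc 0 R))
    (heq : ∀ ξ ∈ Icc (0:ℝ) 1,
      (∫ s in (0:ℝ)..(x ξ), M s) = ξ * ∫ s in (0:ℝ)..R, M s) :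
    ∀ ξ₁ ξ₂ : ℝ, 0 ≤ ξ₁ → ξ₁ ≤ ξ₂ → ξ₂ ≤ 1 →
      (m₀ / M₁) * R * (ξ₂ - ξ₁) ≤ x ξ₂ - x ξ₁ ∧
      x ξ₂ - x ξ₁ ≤ (M₁ / m₀) * R * (ξ₂ - ξ₁) := by
  intro ξ₁ ξ₂ h₁ h₁₂ h₂
  have hξ₁ : ξ₁ ∈ Icc (0:ℝ) 1 := ⟨h₁, h₁₂.trans h₂⟩
  have hξ₂ : ξ₂ ∈ Icc (0:ℝ) 1 := ⟨h₁.trans h₁₂, h₂⟩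
  have h0 : (0:ℝ) ∈ Icc 0 R := ⟨le_rfl, hR.le⟩
  have hM₁ : 0 < M₁ := hm₀.trans_le ((hMbd 0 h0).1.trans (hMbd 0 h0).2)
  have hMint : ∀ c ∈ Icc 0 R, ∀ d ∈ Icc 0 R, IntervalIntegrable M volume c d :=
    fun c hc d hd => (hMc.mono (uIcc_subset_Icc hc hd)).intervalIntegrable
  have hmass : ∫ s in x ξ₁..x ξ₂, M s = (ξ₂ - ξ₁) * ∫ s in (0:ℝ)..R, M s := by
    rw [← integral_interval_sub_left (hMint 0 h0 _ (hmap hξ₂)) (hMint 0 h0 _ (hmap hξ₁)),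
      heq ξ₂ hξ₂, heq ξ₁ hξ₁]
    ring
  obtain ⟨htotal_low, htotal_up⟩ :=
    intervalIntegral_mem_Icc_of_mem_Icc hMc hMbd h0 ⟨hR.le, le_rfl⟩ hR.le
  have hmono : x ξ₁ ≤ x ξ₂ :=
    le_of_intervalIntegral_nonneg hm₀ hMc (fun s hs => (hMbd s hs).1) (hmap hξ₁) (hmap hξ₂) <| by
      rw [hmass]; exact mul_nonneg (sub_nonneg.2 h₁₂) (by nlinarith)
  obtain ⟨hlow, hup⟩ := intervalIntegral_mem_Icc_of_mem_Icc hMc hMbd (hmap hξ₁) (hmap hξ₂) hmono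
  rw [hmass] at hlow hup
  rw [div_mul_eq_mul_div, div_mul_eq_mul_div, div_le_iff₀ hM₁,
    div_mul_eq_mul_div, div_mul_eq_mul_div, le_div_iff₀ hm₀]
  constructor <;> nlinarith
end

section
/- For the tridiagonal system arising from the semi-implicit moving mesh scheme, M_{i+1/2}(x_{i+1} - x_i) - M_{i-1/2}(x_i - x_{i-1}) = 0 for i=1,…,N with x_0 = 0, x_{N+1} = R and all coefficients M_{i±1/2} > 0, the solution exists, is unique, and is strictly increasing: 0 = x_0 < x_1 < ⋯ < x_{N+1} = R. -/
/-!
The equations say that the discrete flux `M_{i+1/2} (x_{i+1} - x_i)` is the same constant `G`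
for `i = 0, …, N`. Hence `x_i = G ∑_{j<i} 1 / M_{j+1/2}`, and the boundary value `x_{N+1} = R`
forces `G = R / ∑_{j≤N} 1 / M_{j+1/2}`, which is positive: the mesh is the unique solution and
its steps `G / M_{i+1/2}` are positive.
-/

open Finset

noncomputable def invPrefixSum (M : ℕ → ℝ) (i : ℕ) : ℝ := ∑ j ∈ range i, (M j)⁻¹

lemma invPrefixSum_zero (M : ℕ → ℝ) : invPrefixSum M 0 = 0 := by
  simp [invPrefixSum]

lemma invPrefixSum_succ (M : ℕ → ℝ) (i : ℕ) :
    invPrefixSum M (i + 1) = invPrefixSum M i + (M i)⁻¹ :=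
  sum_range_succ _ _

lemma invPrefixSum_pos {M : ℕ → ℝ} {n : ℕ} (hM : ∀ i ≤ n, 0 < M i) :
    0 < invPrefixSum M (n + 1) :=
  sum_pos (fun j hj => inv_pos.2 (hM j (Nat.lt_succ_iff.1 (mem_range.1 hj)))) (by simp)

lemma mul_sub_mul_invPrefixSum {M : ℕ → ℝ} {i : ℕ} (hM : M i ≠ 0) (c : ℝ) :
    M i * (c * invPrefixSum M (i + 1) - c * invPrefixSum M i) = c := by
  rw [invPrefixSum_succ]
  field_simp
  ring

lemma flux_eq_of_tridiagonal {M y : ℕ → ℝ} {N : ℕ}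
    (hy : ∀ i, 1 ≤ i → i ≤ N → M i * (y (i + 1) - y i) - M (i - 1) * (y i - y (i - 1)) = 0) :
    ∀ i ≤ N, M i * (y (i + 1) - y i) = M 0 * (y 1 - y 0) := by
  intro i
  induction i with
  | zero => intro _; rfl
  | succ n ih =>
    intro hn
    have hstep := hy (n + 1) (Nat.le_add_left 1 n) hn
    rw [Nat.add_sub_cancel] at hstep
    linarith [ih (Nat.le_of_succ_le hn)]

lemma eq_mul_invPrefixSum_of_flux_eq {M y : ℕ → ℝ} {n : ℕ} {G : ℝ} (hM : ∀ i < n, M i ≠ 0)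
    (hy0 : y 0 = 0) (hflux : ∀ i < n, M i * (y (i + 1) - y i) = G) :
    ∀ i ≤ n, y i = G * invPrefixSum M i := by
  intro i
  induction i with
  | zero => intro _; rw [hy0, invPrefixSum_zero, mul_zero]
  | succ k ih =>
    intro hk
    have hMk := hM k hk
    have hstep : y (k + 1) = y k + G * (M k)⁻¹ := by
      rw [← hflux k hk]
      field_simp
      ring
    rw [hstep, ih (Nat.le_of_succ_le hk), invPrefixSum_succ, mul_add]

/-- The tridiagonal moving-mesh system `M_{i+1/2}(x_{i+1}-x_i) - M_{i-1/2}(x_i-x_{i-1}) = 0`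
for `i = 1,…,N`, with `x_0 = 0`, `x_{N+1} = R` and positive coefficients, has a solution
that is strictly increasing, and this solution is unique. (`Mc i` denotes `M_{i+1/2}`.) -/
theorem stmt_14 (N : ℕ) (R : ℝ) (hR : 0 < R) (Mc : ℕ → ℝ)
    (hMc : ∀ i ≤ N, 0 < Mc i) :
    ∃ x : ℕ → ℝ,
      (x 0 = 0 ∧ x (N + 1) = R ∧
        ∀ i : ℕ, 1 ≤ i → i ≤ N →
          Mc i * (x (i + 1) - x i) - Mc (i - 1) * (x i - x (i - 1)) = 0) ∧
      (∀ i ≤ N, x i < x (i + 1)) ∧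
      (∀ y : ℕ → ℝ,
        (y 0 = 0 ∧ y (N + 1) = R ∧
          ∀ i : ℕ, 1 ≤ i → i ≤ N →
            Mc i * (y (i + 1) - y i) - Mc (i - 1) * (y i - y (i - 1)) = 0) →
        ∀ i ≤ N + 1, y i = x i) := by
  set S := invPrefixSum Mc (N + 1)
  have hS : 0 < S := invPrefixSum_pos hMc
  set x : ℕ → ℝ := fun i => R / S * invPrefixSum Mc i
  have hflux : ∀ i ≤ N, Mc i * (x (i + 1) - x i) = R / S :=
    fun i hi => mul_sub_mul_invPrefixSum (hMc i hi).ne' _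
  refine ⟨x, ⟨?_, div_mul_cancel₀ R hS.ne', ?_⟩, ?_, ?_⟩
  · simp [x, invPrefixSum_zero]
  · intro i hi1 hiN
    obtain ⟨k, rfl⟩ := Nat.exists_eq_add_of_le' hi1
    rw [Nat.add_sub_cancel, hflux (k + 1) hiN, hflux k (by omega), sub_self]
  · intro i hi
    have : 0 < Mc i * (x (i + 1) - x i) := hflux i hi ▸ div_pos hR hS
    exact sub_pos.1 (pos_of_mul_pos_right this (hMc i hi).le)
  · rintro y ⟨hy0, hyR, hy⟩
    have hy_eq := eq_mul_invPrefixSum_of_flux_eq (fun i hi => (hMc i (Nat.lt_succ_iff.1 hi)).ne')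
      hy0 (fun i hi => flux_eq_of_tridiagonal hy i (Nat.lt_succ_iff.1 hi))
    have hG : Mc 0 * (y 1 - y 0) = R / S := by
      rw [eq_div_iff hS.ne', ← hyR, hy_eq (N + 1) le_rfl]
    intro i hi
    rw [hy_eq i hi, hG]
end
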